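/- arXiv:1709.09110 — 7 statements merged into one kernel-verified Lean document; each statement's English description precedes it below -/
import Mathlib

section
/- Let Z be a compact metric space with at least four points and let ρ₁, ρ₂ be two antipodal diameter-one metrics on Z that are Moebius equivalent (i.e. all metric cross-ratios [ξξ'ηη']_ρ = ρ(ξ,η)ρ(ξ',η')/(ρ(ξ,η')ρ(ξ',η)) agree). Suppose there is a continuous positive function dρ₂/dρ₁ on Z satisfying ρ₂(ξ,η)² = (dρ₂/dρ₁)(ξ)·(dρ₂/dρ₁)(η)·ρ₁(ξ,η)² for all ξ,η. Then (max over Z of dρ₂/dρ₁)·(min over Z of dρ₂/dρ₁) = 1. -/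
open Set Filter Topology

/-- An antipodal metric of diameter one on a topological space `Z`,
given as a two-variable function. -/
structure IsAntipodalMetric {Z : Type*} [TopologicalSpace Z] (ρ : Z → Z → ℝ) : Prop where
  symm : ∀ ξ η, ρ ξ η = ρ η ξ
  eq_zero_iff : ∀ ξ η, ρ ξ η = 0 ↔ ξ = η
  nonneg : ∀ ξ η, 0 ≤ ρ ξ η
  triangle : ∀ ξ η ζ, ρ ξ ζ ≤ ρ ξ η + ρ η ζ
  continuous : Continuous fun p : Z × Z => ρ p.1 p.2
  le_one : ∀ ξ η, ρ ξ η ≤ 1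
  antipodal : ∀ ξ, ∃ η, ρ ξ η = 1

/-- Two metrics are Moebius equivalent if all metric cross-ratios
`[ξξ'ηη']_ρ = ρ(ξ,η)ρ(ξ',η')/(ρ(ξ,η')ρ(ξ',η))` agree (stated multiplicatively). -/
def MoebiusEquiv {Z : Type*} (ρ σ : Z → Z → ℝ) : Prop :=
  ∀ ξ ξ' η η' : Z, ξ ≠ ξ' → ξ ≠ η → ξ ≠ η' → ξ' ≠ η → ξ' ≠ η' → η ≠ η' →
    ρ ξ η * ρ ξ' η' * (σ ξ η' * σ ξ' η) = σ ξ η * σ ξ' η' * (ρ ξ η' * ρ ξ' η)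

section GeometricMeanValue

variable {Z : Type*} {ρ₁ ρ₂ : Z → Z → ℝ} {lam : Z → ℝ} {ξ η : Z}

theorem mul_le_one_of_antipode
    (hGMVT : ρ₂ ξ η ^ 2 = lam ξ * lam η * ρ₁ ξ η ^ 2) (hanti : ρ₁ ξ η = 1)
    (hnonneg : 0 ≤ ρ₂ ξ η) (hle : ρ₂ ξ η ≤ 1) :
    lam ξ * lam η ≤ 1 := by
  rw [hanti, one_pow, mul_one] at hGMVT
  rw [← hGMVT]
  exact pow_le_one₀ hnonneg hle

theorem one_le_mul_of_antipode
    (hGMVT : ρ₂ ξ η ^ 2 = lam ξ * lam η * ρ₁ ξ η ^ 2) (hanti : ρ₂ ξ η = 1)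
    (hnonneg : 0 ≤ ρ₁ ξ η) (hle : ρ₁ ξ η ≤ 1) (hlam : 0 ≤ lam ξ * lam η) :
    1 ≤ lam ξ * lam η := by
  rw [hanti, one_pow] at hGMVT
  calc 1 = lam ξ * lam η * ρ₁ ξ η ^ 2 := hGMVT
    _ ≤ lam ξ * lam η := mul_le_of_le_one_right hlam (pow_le_one₀ hnonneg hle)

end GeometricMeanValue

theorem maxmin_derivative_general {Z : Type*} [MetricSpace Z]
    (ρ₁ ρ₂ : Z → Z → ℝ)
    (h₁ : IsAntipodalMetric ρ₁) (h₂ : IsAntipodalMetric ρ₂)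
    (lam : Z → ℝ) (hlampos : ∀ ξ, 0 < lam ξ)
    (hGMVT : ∀ ξ η, ρ₂ ξ η ^ 2 = lam ξ * lam η * ρ₁ ξ η ^ 2) :
    ∀ ξmax ξmin : Z, IsMaxOn lam Set.univ ξmax → IsMinOn lam Set.univ ξmin →
      lam ξmax * lam ξmin = 1 := by
  intro ξmax ξmin hmax hmin
  obtain ⟨η, hη⟩ := h₁.antipodal ξmax
  obtain ⟨η', hη'⟩ := h₂.antipodal ξmin
  have hupper : lam ξmax * lam η ≤ 1 :=
    mul_le_one_of_antipode (hGMVT ξmax η) hη (h₂.nonneg ξmax η) (h₂.le_one ξmax η)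
  have hlower : 1 ≤ lam ξmin * lam η' :=
    one_le_mul_of_antipode (hGMVT ξmin η') hη' (h₁.nonneg ξmin η') (h₁.le_one ξmin η')
      (mul_pos (hlampos ξmin) (hlampos η')).le
  have hminη : lam ξmin ≤ lam η := hmin (mem_univ η)
  have hmaxη' : lam η' ≤ lam ξmax := hmax (mem_univ η')
  apply le_antisymm
  · calc lam ξmax * lam ξmin ≤ lam ξmax * lam η := by gcongr; exact (hlampos ξmax).le
      _ ≤ 1 := hupper
  · calc 1 ≤ lam ξmin * lam η' := hlower
      _ ≤ lam ξmin * lam ξmax := by gcongr; exact (hlampos ξmin).le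
      _ = lam ξmax * lam ξmin := mul_comm _ _

/-- for Moebius-equivalent antipodal diameter-one metrics `ρ₁, ρ₂` on
a compact space with at least four points, with continuous positive derivative `λ = dρ₂/dρ₁`
satisfying the Geometric Mean Value Theorem, one has `max λ · min λ = 1`. -/
theorem maxmin_derivative {Z : Type*} [MetricSpace Z] [CompactSpace Z]
    (hfour : ∃ a b c d : Z, a ≠ b ∧ a ≠ c ∧ a ≠ d ∧ b ≠ c ∧ b ≠ d ∧ c ≠ d)
    (ρ₁ ρ₂ : Z → Z → ℝ)
    (h₁ : IsAntipodalMetric ρ₁) (h₂ : IsAntipodalMetric ρ₂)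
    (hmoeb : MoebiusEquiv ρ₁ ρ₂)
    (lam : Z → ℝ) (hlamcont : Continuous lam) (hlampos : ∀ ξ, 0 < lam ξ)
    (hGMVT : ∀ ξ η, ρ₂ ξ η ^ 2 = lam ξ * lam η * ρ₁ ξ η ^ 2) :
    ∀ ξmax ξmin : Z, IsMaxOn lam Set.univ ξmax → IsMinOn lam Set.univ ξmin →
      lam ξmax * lam ξmin = 1 :=
  maxmin_derivative_general ρ₁ ρ₂ h₁ h₂ lam hlampos hGMVT
end

section
/- Let Z be a compact metric space and ρ₁, ρ₂ antipodal diameter-one metrics on Z with a continuous positive derivative function λ = dρ₂/dρ₁ satisfying ρ₂(ξ,η)² = λ(ξ)λ(η)ρ₁(ξ,η)² for all ξ,η. If λ attains its maximum at ξ ∈ Z and η ∈ Z satisfies ρ₁(ξ,η) = 1, then λ attains its minimum at η and ρ₂(ξ,η) = 1. -/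
open Set Filter Topology

/-!
Antipodes for `ρ₂` give `λ(x)λ(w) ≥ 1` for some `w`, hence `λ(x) · max λ ≥ 1` for every `x`,
while `ρ₁(ξ,η) = 1` and `ρ₂ ≤ 1` give `max λ · λ(η) = λ(ξ)λ(η) ≤ 1`. Comparing the two,
`λ(η) ≤ λ(x)` for all `x`, and taking `x = η` forces `λ(ξ)λ(η) = 1`, i.e. `ρ₂(ξ,η) = 1`.
-/

namespace IsAntipodalMetric

variable {Z : Type*} [TopologicalSpace Z] {ρ ρ₁ ρ₂ : Z → Z → ℝ} {lam : Z → ℝ}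

theorem sq_le_one (h : IsAntipodalMetric ρ) (ξ η : Z) : ρ ξ η ^ 2 ≤ 1 :=
  pow_le_one₀ (h.nonneg ξ η) (h.le_one ξ η)

theorem one_le_mul_of_eq_one (h₁ : IsAntipodalMetric ρ₁) {x w : Z}
    (hmvt : ρ₂ x w ^ 2 = lam x * lam w * ρ₁ x w ^ 2) (hxw : ρ₂ x w = 1) :
    1 ≤ lam x * lam w := by
  rw [hxw, one_pow] at hmvt
  have hpos : 0 < lam x * lam w := pos_of_mul_pos_left (hmvt ▸ one_pos) (sq_nonneg _)
  calc 1 = lam x * lam w * ρ₁ x w ^ 2 := hmvt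
    _ ≤ lam x * lam w := mul_le_of_le_one_right hpos.le (h₁.sq_le_one x w)

theorem mul_le_one_of_eq_one (h₂ : IsAntipodalMetric ρ₂) {ξ η : Z}
    (hmvt : ρ₂ ξ η ^ 2 = lam ξ * lam η * ρ₁ ξ η ^ 2) (hξη : ρ₁ ξ η = 1) :
    lam ξ * lam η ≤ 1 := by
  simpa [hmvt, hξη] using h₂.sq_le_one ξ η

theorem one_le_mul_of_isMaxOn (h₁ : IsAntipodalMetric ρ₁) (h₂ : IsAntipodalMetric ρ₂)
    (hlampos : ∀ ξ, 0 < lam ξ) (hmvt : ∀ ξ η, ρ₂ ξ η ^ 2 = lam ξ * lam η * ρ₁ ξ η ^ 2)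
    {ξ : Z} (hmax : IsMaxOn lam univ ξ) (x : Z) :
    1 ≤ lam x * lam ξ := by
  obtain ⟨w, hw⟩ := h₂.antipodal x
  calc 1 ≤ lam x * lam w := h₁.one_le_mul_of_eq_one (hmvt x w) hw
    _ ≤ lam x * lam ξ := mul_le_mul_of_nonneg_left (hmax (mem_univ w)) (hlampos x).le

end IsAntipodalMetric

theorem min_at_antipode_general {Z : Type*} [MetricSpace Z]
    (ρ₁ ρ₂ : Z → Z → ℝ)
    (h₁ : IsAntipodalMetric ρ₁) (h₂ : IsAntipodalMetric ρ₂)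
    (lam : Z → ℝ) (hlampos : ∀ ξ, 0 < lam ξ)
    (hGMVT : ∀ ξ η, ρ₂ ξ η ^ 2 = lam ξ * lam η * ρ₁ ξ η ^ 2)
    (ξ η : Z) (hmax : IsMaxOn lam Set.univ ξ) (hξη : ρ₁ ξ η = 1) :
    IsMinOn lam Set.univ η ∧ ρ₂ ξ η = 1 := by
  have hlow := h₁.one_le_mul_of_isMaxOn h₂ hlampos hGMVT hmax
  have hup : lam ξ * lam η ≤ 1 := h₂.mul_le_one_of_eq_one (hGMVT ξ η) hξη
  have hprod : lam ξ * lam η = 1 := le_antisymm hup (by linarith [hlow η])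
  refine ⟨fun x _ => le_of_mul_le_mul_left ?_ (hlampos ξ), ?_⟩
  · calc lam ξ * lam η ≤ 1 := hup
      _ ≤ lam x * lam ξ := hlow x
      _ = lam ξ * lam x := mul_comm _ _
  · have hsq : ρ₂ ξ η ^ 2 = 1 := by rw [hGMVT, hprod, hξη, one_pow, one_mul]
    exact (pow_eq_one_iff_of_nonneg (h₂.nonneg ξ η) two_ne_zero).mp hsq

/-- if the derivative `λ = dρ₂/dρ₁` attains its maximum at `ξ` and
`ρ₁(ξ,η) = 1`, then `λ` attains its minimum at `η` and `ρ₂(ξ,η) = 1`. -/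
theorem min_at_antipode {Z : Type*} [MetricSpace Z] [CompactSpace Z]
    (ρ₁ ρ₂ : Z → Z → ℝ)
    (h₁ : IsAntipodalMetric ρ₁) (h₂ : IsAntipodalMetric ρ₂)
    (lam : Z → ℝ) (hlamcont : Continuous lam) (hlampos : ∀ ξ, 0 < lam ξ)
    (hGMVT : ∀ ξ η, ρ₂ ξ η ^ 2 = lam ξ * lam η * ρ₁ ξ η ^ 2)
    (ξ η : Z) (hmax : IsMaxOn lam Set.univ ξ) (hξη : ρ₁ ξ η = 1) :
    IsMinOn lam Set.univ η ∧ ρ₂ ξ η = 1 :=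
  min_at_antipode_general ρ₁ ρ₂ h₁ h₂ lam hlampos hGMVT ξ η hmax hξη
end

section
/- Let Z be a compact metric space with at least four points and let M denote the set of antipodal diameter-one metrics on Z Moebius equivalent to a fixed such metric ρ₀, where each pair ρ₁, ρ₂ ∈ M admits a continuous positive derivative dρ₂/dρ₁ satisfying the Geometric Mean Value Theorem, the chain rule dρ₃/dρ₁ = (dρ₃/dρ₂)(dρ₂/dρ₁), and dρ₂/dρ₁ = 1/(dρ₁/dρ₂). Then d_M(ρ₁,ρ₂) := max_{ξ∈Z} log (dρ₂/dρ₁)(ξ) defines a metric on M. -/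
open Set Filter Topology

/-- `dM D ρ₁ ρ₂ = max_ξ log (dρ₂/dρ₁)(ξ)`, where `D ρ₂ ρ₁` denotes the derivative
`dρ₂/dρ₁`. -/
noncomputable def dM {Z : Type*} (D : (Z → Z → ℝ) → (Z → Z → ℝ) → Z → ℝ)
    (ρ₁ ρ₂ : Z → Z → ℝ) : ℝ :=
  ⨆ ξ : Z, Real.log (D ρ₂ ρ₁ ξ)

/-!
Write `f = log (dρ₂/dρ₁)`. At a pair `ξ, η` that is antipodal for `ρ₂`, the Geometric Mean
Value Theorem reads `1 = (dρ₂/dρ₁)(ξ) (dρ₂/dρ₁)(η) ρ₁(ξ, η)²` with `ρ₁(ξ, η) ≤ 1`, so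
`f ξ + f η ≥ 0`. Hence `-max f ≤ f ≤ max f`: this gives `d_M ≥ 0`, forces `f = 0` (and then
`ρ₁ = ρ₂`) when `d_M = 0`, and, because the chain rule makes `log (dρ₁/dρ₂) = -f`, gives the
symmetry of `d_M`. The triangle inequality is the chain rule under the logarithm.
-/

open Real

section PairedFunction

variable {ι : Type*} {f : ι → ℝ}

theorem neg_ciSup_le_of_forall_exists_add_nonneg (hf : BddAbove (range f))
    (h : ∀ i, ∃ j, 0 ≤ f i + f j) (i : ι) : -⨆ i, f i ≤ f i := by
  obtain ⟨j, hij⟩ := h i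
  linarith [le_ciSup hf j]

theorem ciSup_nonneg_of_forall_exists_add_nonneg [Nonempty ι] (hf : BddAbove (range f))
    (h : ∀ i, ∃ j, 0 ≤ f i + f j) : 0 ≤ ⨆ i, f i := by
  obtain ⟨i⟩ := ‹Nonempty ι›
  linarith [le_ciSup hf i, neg_ciSup_le_of_forall_exists_add_nonneg hf h i]

theorem eq_zero_of_ciSup_eq_zero (hf : BddAbove (range f)) (h : ∀ i, ∃ j, 0 ≤ f i + f j)
    (h₀ : ⨆ i, f i = 0) (i : ι) : f i = 0 := by
  have hle := le_ciSup hf i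
  have hge := neg_ciSup_le_of_forall_exists_add_nonneg hf h i
  rw [h₀] at hle hge
  linarith

theorem ciSup_le_ciSup_of_eq_neg [Nonempty ι] {g : ι → ℝ} (hf : BddAbove (range f))
    (h : ∀ i, ∃ j, 0 ≤ f i + f j) (hg : ∀ i, g i = -f i) : ⨆ i, g i ≤ ⨆ i, f i :=
  ciSup_le fun i => by linarith [hg i, neg_ciSup_le_of_forall_exists_add_nonneg hf h i]

end PairedFunction

namespace IsAntipodalMetric

variable {Z : Type*} [TopologicalSpace Z] {ρ₁ ρ₂ : Z → Z → ℝ} {g : Z → ℝ}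

theorem exists_log_add_log_nonneg (h₁ : IsAntipodalMetric ρ₁) (h₂ : IsAntipodalMetric ρ₂)
    (hpos : ∀ ξ, 0 < g ξ) (hgmvt : ∀ ξ η, ρ₂ ξ η ^ 2 = g ξ * g η * ρ₁ ξ η ^ 2) (ξ : Z) :
    ∃ η, 0 ≤ log (g ξ) + log (g η) := by
  obtain ⟨η, hη⟩ := h₂.antipodal ξ
  refine ⟨η, ?_⟩
  have hρ₁ : ρ₁ ξ η ^ 2 ≤ 1 := pow_le_one₀ (h₁.nonneg ξ η) (h₁.le_one ξ η)
  have hprod : 1 ≤ g ξ * g η := by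
    have := hgmvt ξ η
    rw [hη] at this
    nlinarith [mul_pos (hpos ξ) (hpos η)]
  rw [← log_mul (hpos ξ).ne' (hpos η).ne']
  exact log_nonneg hprod

theorem eq_of_forall_eq_one (h₁ : IsAntipodalMetric ρ₁) (h₂ : IsAntipodalMetric ρ₂)
    (hgmvt : ∀ ξ η, ρ₂ ξ η ^ 2 = g ξ * g η * ρ₁ ξ η ^ 2) (hg : ∀ ξ, g ξ = 1) : ρ₁ = ρ₂ := by
  funext ξ η
  have hsq := hgmvt ξ η
  rw [hg, hg, one_mul, one_mul] at hsq
  exact (sq_eq_sq₀ (h₁.nonneg ξ η) (h₂.nonneg ξ η)).1 hsq.symm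

end IsAntipodalMetric

theorem dM_le_dM_add_dM {Z : Type*} [Nonempty Z] {D : (Z → Z → ℝ) → (Z → Z → ℝ) → Z → ℝ}
    {ρ₁ ρ₂ ρ₃ : Z → Z → ℝ} (hbdd₁₂ : BddAbove (range fun ξ => log (D ρ₂ ρ₁ ξ)))
    (hbdd₂₃ : BddAbove (range fun ξ => log (D ρ₃ ρ₂ ξ)))
    (hpos₁₂ : ∀ ξ, 0 < D ρ₂ ρ₁ ξ) (hpos₂₃ : ∀ ξ, 0 < D ρ₃ ρ₂ ξ)
    (hchain : ∀ ξ, D ρ₃ ρ₁ ξ = D ρ₃ ρ₂ ξ * D ρ₂ ρ₁ ξ) :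
    dM D ρ₁ ρ₃ ≤ dM D ρ₁ ρ₂ + dM D ρ₂ ρ₃ :=
  ciSup_le fun ξ => by
    rw [hchain, log_mul (hpos₂₃ ξ).ne' (hpos₁₂ ξ).ne', add_comm]
    exact add_le_add (le_ciSup hbdd₁₂ ξ) (le_ciSup hbdd₂₃ ξ)

theorem dM_is_metric_general {Z : Type*} [MetricSpace Z] [CompactSpace Z] [Nonempty Z]
    (ρ₀ : Z → Z → ℝ)
    (M : Set (Z → Z → ℝ))
    (hM : M = {ρ | IsAntipodalMetric ρ ∧ MoebiusEquiv ρ ρ₀})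
    -- the derivative `D ρ₂ ρ₁ = dρ₂/dρ₁` of Moebius metrics, with its properties:
    (D : (Z → Z → ℝ) → (Z → Z → ℝ) → Z → ℝ)
    (hDpos : ∀ ρ₁ ∈ M, ∀ ρ₂ ∈ M, ∀ ξ, 0 < D ρ₂ ρ₁ ξ)
    (hDcont : ∀ ρ₁ ∈ M, ∀ ρ₂ ∈ M, Continuous (D ρ₂ ρ₁))
    (hGMVT : ∀ ρ₁ ∈ M, ∀ ρ₂ ∈ M, ∀ ξ η,
      ρ₂ ξ η ^ 2 = D ρ₂ ρ₁ ξ * D ρ₂ ρ₁ η * ρ₁ ξ η ^ 2)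
    (hchain : ∀ ρ₁ ∈ M, ∀ ρ₂ ∈ M, ∀ ρ₃ ∈ M, ∀ ξ,
      D ρ₃ ρ₁ ξ = D ρ₃ ρ₂ ξ * D ρ₂ ρ₁ ξ) :
    (∀ ρ₁ ∈ M, ∀ ρ₂ ∈ M, 0 ≤ dM D ρ₁ ρ₂) ∧
    (∀ ρ₁ ∈ M, ∀ ρ₂ ∈ M, (dM D ρ₁ ρ₂ = 0 ↔ ρ₁ = ρ₂)) ∧
    (∀ ρ₁ ∈ M, ∀ ρ₂ ∈ M, dM D ρ₁ ρ₂ = dM D ρ₂ ρ₁) ∧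
    (∀ ρ₁ ∈ M, ∀ ρ₂ ∈ M, ∀ ρ₃ ∈ M, dM D ρ₁ ρ₃ ≤ dM D ρ₁ ρ₂ + dM D ρ₂ ρ₃) := by
  have hanti : ∀ ρ ∈ M, IsAntipodalMetric ρ := by rw [hM]; exact fun ρ hρ => hρ.1
  have hbdd : ∀ ρ₁ ∈ M, ∀ ρ₂ ∈ M, BddAbove (range fun ξ => log (D ρ₂ ρ₁ ξ)) :=
    fun ρ₁ h₁ ρ₂ h₂ => (isCompact_range
      ((hDcont ρ₁ h₁ ρ₂ h₂).log fun ξ => (hDpos ρ₁ h₁ ρ₂ h₂ ξ).ne')).bddAbove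
  have hpair : ∀ ρ₁ ∈ M, ∀ ρ₂ ∈ M, ∀ ξ, ∃ η, 0 ≤ log (D ρ₂ ρ₁ ξ) + log (D ρ₂ ρ₁ η) :=
    fun ρ₁ h₁ ρ₂ h₂ => (hanti ρ₁ h₁).exists_log_add_log_nonneg (hanti ρ₂ h₂)
      (hDpos ρ₁ h₁ ρ₂ h₂) (hGMVT ρ₁ h₁ ρ₂ h₂)
  have hself : ∀ ρ ∈ M, ∀ ξ, D ρ ρ ξ = 1 := fun ρ hρ ξ =>
    (mul_eq_left₀ (hDpos ρ hρ ρ hρ ξ).ne').1 (hchain ρ hρ ρ hρ ρ hρ ξ).symm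
  have hlog_swap : ∀ ρ₁ ∈ M, ∀ ρ₂ ∈ M, ∀ ξ, log (D ρ₁ ρ₂ ξ) = -log (D ρ₂ ρ₁ ξ) :=
    fun ρ₁ h₁ ρ₂ h₂ ξ => by
      rw [← log_inv, eq_inv_of_mul_eq_one_left ((hchain ρ₁ h₁ ρ₂ h₂ ρ₁ h₁ ξ).symm.trans
        (hself ρ₁ h₁ ξ))]
  refine ⟨fun ρ₁ h₁ ρ₂ h₂ => ?_, fun ρ₁ h₁ ρ₂ h₂ => ⟨fun h₀ => ?_, ?_⟩,
    fun ρ₁ h₁ ρ₂ h₂ => le_antisymm ?_ ?_, fun ρ₁ h₁ ρ₂ h₂ ρ₃ h₃ => ?_⟩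
  · exact ciSup_nonneg_of_forall_exists_add_nonneg (hbdd ρ₁ h₁ ρ₂ h₂) (hpair ρ₁ h₁ ρ₂ h₂)
  · refine (hanti ρ₁ h₁).eq_of_forall_eq_one (hanti ρ₂ h₂) (hGMVT ρ₁ h₁ ρ₂ h₂) fun ξ => ?_
    exact eq_one_of_pos_of_log_eq_zero (hDpos ρ₁ h₁ ρ₂ h₂ ξ)
      (eq_zero_of_ciSup_eq_zero (hbdd ρ₁ h₁ ρ₂ h₂) (hpair ρ₁ h₁ ρ₂ h₂) h₀ ξ)
  · rintro rfl
    simp [dM, hself ρ₁ h₁]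
  · exact ciSup_le_ciSup_of_eq_neg (hbdd ρ₂ h₂ ρ₁ h₁) (hpair ρ₂ h₂ ρ₁ h₁) (hlog_swap ρ₂ h₂ ρ₁ h₁)
  · exact ciSup_le_ciSup_of_eq_neg (hbdd ρ₁ h₁ ρ₂ h₂) (hpair ρ₁ h₁ ρ₂ h₂) (hlog_swap ρ₁ h₁ ρ₂ h₂)
  · exact dM_le_dM_add_dM (hbdd ρ₁ h₁ ρ₂ h₂) (hbdd ρ₂ h₂ ρ₃ h₃) (hDpos ρ₁ h₁ ρ₂ h₂)
      (hDpos ρ₂ h₂ ρ₃ h₃) (hchain ρ₁ h₁ ρ₂ h₂ ρ₃ h₃)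

/-- `d_M(ρ₁,ρ₂) = max_ξ log (dρ₂/dρ₁)(ξ)` defines a metric on the space `M`
of antipodal diameter-one metrics Moebius equivalent to a fixed one `ρ₀`. -/
theorem dM_is_metric {Z : Type*} [MetricSpace Z] [CompactSpace Z] [Nonempty Z]
    (hfour : ∃ a b c d : Z, a ≠ b ∧ a ≠ c ∧ a ≠ d ∧ b ≠ c ∧ b ≠ d ∧ c ≠ d)
    (ρ₀ : Z → Z → ℝ) (h₀ : IsAntipodalMetric ρ₀)
    (M : Set (Z → Z → ℝ))
    (hM : M = {ρ | IsAntipodalMetric ρ ∧ MoebiusEquiv ρ ρ₀})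
    -- the derivative `D ρ₂ ρ₁ = dρ₂/dρ₁` of Moebius metrics, with its properties:
    (D : (Z → Z → ℝ) → (Z → Z → ℝ) → Z → ℝ)
    (hDpos : ∀ ρ₁ ∈ M, ∀ ρ₂ ∈ M, ∀ ξ, 0 < D ρ₂ ρ₁ ξ)
    (hDcont : ∀ ρ₁ ∈ M, ∀ ρ₂ ∈ M, Continuous (D ρ₂ ρ₁))
    (hGMVT : ∀ ρ₁ ∈ M, ∀ ρ₂ ∈ M, ∀ ξ η,
      ρ₂ ξ η ^ 2 = D ρ₂ ρ₁ ξ * D ρ₂ ρ₁ η * ρ₁ ξ η ^ 2)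
    (hchain : ∀ ρ₁ ∈ M, ∀ ρ₂ ∈ M, ∀ ρ₃ ∈ M, ∀ ξ,
      D ρ₃ ρ₁ ξ = D ρ₃ ρ₂ ξ * D ρ₂ ρ₁ ξ)
    (hinv : ∀ ρ₁ ∈ M, ∀ ρ₂ ∈ M, ∀ ξ, D ρ₂ ρ₁ ξ = (D ρ₁ ρ₂ ξ)⁻¹) :
    (∀ ρ₁ ∈ M, ∀ ρ₂ ∈ M, 0 ≤ dM D ρ₁ ρ₂) ∧
    (∀ ρ₁ ∈ M, ∀ ρ₂ ∈ M, (dM D ρ₁ ρ₂ = 0 ↔ ρ₁ = ρ₂)) ∧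
    (∀ ρ₁ ∈ M, ∀ ρ₂ ∈ M, dM D ρ₁ ρ₂ = dM D ρ₂ ρ₁) ∧
    (∀ ρ₁ ∈ M, ∀ ρ₂ ∈ M, ∀ ρ₃ ∈ M, dM D ρ₁ ρ₃ ≤ dM D ρ₁ ρ₂ + dM D ρ₂ ρ₃) :=
  dM_is_metric_general ρ₀ M hM D hDpos hDcont hGMVT hchain
end

section
/- In the hyperbolic plane of curvature -1, consider geodesic triangles with vertex angle θ between two sides of lengths a and b, and opposite side of length c. If a, b, c → ∞ in such a way that a + b - c → 2s for some s ≥ 0 (and θ is determined by the law of cosines cosh c = cosh a cosh b - sinh a sinh b cos θ), then cos θ → 1 - 2e^{-2s}; equivalently sin(θ_∞/2) = e^{-s} where θ_∞ is the limiting angle. -/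
/-!
Multiplying numerator and denominator of `cos θ = (cosh a cosh b - cosh c) / (sinh a sinh b)`
by `4 e^{-(a+b)}` turns both into polynomials in `e^{-2a}`, `e^{-2b}` and `e^{±(a+b-c)}`. The
first two tend to `0` and the last to `e^{∓2s}`, so `cos θ → 1 - 2e^{-2s}`; the half-angle formula
`1 - cos θ = 2 sin²(θ/2)` then gives `sin(θ∞/2) = e^{-s}`.
-/

open Filter Topology Real

lemma cosh_mul_cosh_mul_four_mul_exp_neg (x y : ℝ) :
    cosh x * cosh y * (4 * exp (-(x + y))) = (1 + exp (-(2 * x))) * (1 + exp (-(2 * y))) := by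
  simp only [cosh_eq, neg_add, two_mul, exp_add, exp_neg]
  field_simp
  ring

lemma sinh_mul_sinh_mul_four_mul_exp_neg (x y : ℝ) :
    sinh x * sinh y * (4 * exp (-(x + y))) = (1 - exp (-(2 * x))) * (1 - exp (-(2 * y))) := by
  simp only [sinh_eq, neg_add, two_mul, exp_add, exp_neg]
  field_simp
  ring

lemma cosh_mul_four_mul_exp_neg (x y z : ℝ) :
    cosh z * (4 * exp (-(x + y))) =
      2 * (exp (-(x + y - z)) + exp (-(2 * x)) * exp (-(2 * y)) * exp (x + y - z)) := by
  simp only [cosh_eq, neg_add, sub_eq_add_neg, two_mul, exp_add, exp_neg]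
  field_simp
  ring

lemma tendsto_exp_neg_two_mul {α : Type*} {l : Filter α} {x : α → ℝ} (hx : Tendsto x l atTop) :
    Tendsto (fun i => exp (-(2 * x i))) l (𝓝 0) :=
  tendsto_exp_atBot.comp (tendsto_neg_atTop_atBot.comp (hx.const_mul_atTop two_pos))

lemma tendsto_cosh_law_quotient {α : Type*} {l : Filter α} {x y z : α → ℝ} {L : ℝ}
    (hx : Tendsto x l atTop) (hy : Tendsto y l atTop)
    (hxyz : Tendsto (fun i => x i + y i - z i) l (𝓝 L)) :
    Tendsto (fun i => (cosh (x i) * cosh (y i) - cosh (z i)) / (sinh (x i) * sinh (y i))) l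
      (𝓝 (1 - 2 * exp (-L))) := by
  have hX := tendsto_exp_neg_two_mul hx
  have hY := tendsto_exp_neg_two_mul hy
  have hE : Tendsto (fun i => exp (x i + y i - z i)) l (𝓝 (exp L)) :=
    (continuous_exp.tendsto L).comp hxyz
  have hE' : Tendsto (fun i => exp (-(x i + y i - z i))) l (𝓝 (exp (-L))) :=
    (continuous_exp.tendsto (-L)).comp hxyz.neg
  have hnum : Tendsto (fun i => (cosh (x i) * cosh (y i) - cosh (z i)) * (4 * exp (-(x i + y i))))
      l (𝓝 (1 - 2 * exp (-L))) := by
    have := (((tendsto_const_nhds (x := (1 : ℝ))).add hX).mul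
      ((tendsto_const_nhds (x := (1 : ℝ))).add hY)).sub
      ((hE'.add ((hX.mul hY).mul hE)).const_mul 2)
    simp only [add_zero, zero_mul, mul_one] at this
    refine this.congr fun i => ?_
    rw [sub_mul, cosh_mul_cosh_mul_four_mul_exp_neg, cosh_mul_four_mul_exp_neg]
  have hden : Tendsto (fun i => sinh (x i) * sinh (y i) * (4 * exp (-(x i + y i)))) l (𝓝 1) := by
    have := ((tendsto_const_nhds (x := (1 : ℝ))).sub hX).mul
      ((tendsto_const_nhds (x := (1 : ℝ))).sub hY)
    simp only [sub_zero, mul_one] at this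
    exact this.congr fun i => (sinh_mul_sinh_mul_four_mul_exp_neg _ _).symm
  rw [← div_one (1 - 2 * exp (-L))]
  exact (hnum.div hden one_ne_zero).congr fun i => mul_div_mul_right _ _ (by positivity)

lemma tendsto_cos_of_cosh_law {α : Type*} {l : Filter α} {x y z θ : α → ℝ} {L : ℝ}
    (hx : Tendsto x l atTop) (hy : Tendsto y l atTop)
    (hxyz : Tendsto (fun i => x i + y i - z i) l (𝓝 L))
    (hlaw : ∀ i, cosh (z i) = cosh (x i) * cosh (y i) - sinh (x i) * sinh (y i) * cos (θ i)) :
    Tendsto (fun i => cos (θ i)) l (𝓝 (1 - 2 * exp (-L))) := by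
  refine (tendsto_cosh_law_quotient hx hy hxyz).congr' ?_
  filter_upwards [hx.eventually_gt_atTop 0, hy.eventually_gt_atTop 0] with i hxi hyi
  have hsinh : sinh (x i) * sinh (y i) ≠ 0 :=
    (mul_pos (sinh_pos_iff.2 hxi) (sinh_pos_iff.2 hyi)).ne'
  rw [hlaw i, sub_sub_cancel, mul_div_cancel_left₀ _ hsinh]

lemma sin_half_eq_of_cos_eq_one_sub_two_mul_sq {θ r : ℝ} (hθ₀ : 0 ≤ θ) (hθ : θ ≤ 2 * π)
    (hr : 0 ≤ r) (hcos : cos θ = 1 - 2 * r ^ 2) : sin (θ / 2) = r := by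
  rw [sin_half_eq_sqrt hθ₀ hθ, hcos, show (1 - (1 - 2 * r ^ 2)) / 2 = r ^ 2 by ring, sqrt_sq hr]

theorem gromov_product_angle_limit_general (s : ℝ)
    (a b c θ : ℕ → ℝ)
    (ha : Tendsto a atTop atTop) (hb : Tendsto b atTop atTop)
    (habc : Tendsto (fun n => a n + b n - c n) atTop (𝓝 (2 * s)))
    (hlaw : ∀ n, Real.cosh (c n) =
      Real.cosh (a n) * Real.cosh (b n) - Real.sinh (a n) * Real.sinh (b n) * Real.cos (θ n)) :
    Tendsto (fun n => Real.cos (θ n)) atTop (𝓝 (1 - 2 * Real.exp (-(2 * s)))) ∧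
    ∀ θinf ∈ Set.Icc 0 Real.pi, Tendsto θ atTop (𝓝 θinf) →
      Real.sin (θinf / 2) = Real.exp (-s) := by
  have hcos := tendsto_cos_of_cosh_law ha hb habc hlaw
  refine ⟨hcos, fun θinf ⟨hθ₀, hθπ⟩ hθ => ?_⟩
  refine sin_half_eq_of_cos_eq_one_sub_two_mul_sq hθ₀ (by linarith [pi_pos]) (exp_nonneg _) ?_
  rw [← exp_nat_mul, Nat.cast_ofNat, mul_neg]
  exact tendsto_nhds_unique ((continuous_cos.tendsto θinf).comp hθ) hcos

/-- in the hyperbolic plane of curvature -1, if `a, b, c → ∞` with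
`a + b - c → 2s` (`s ≥ 0`) and the angles `θ` are determined by the hyperbolic law of
cosines `cosh c = cosh a cosh b - sinh a sinh b cos θ`, then `cos θ → 1 - 2e^{-2s}`;
equivalently the limiting angle `θ∞` satisfies `sin(θ∞/2) = e^{-s}`. -/
theorem gromov_product_angle_limit (s : ℝ) (hs : 0 ≤ s)
    (a b c θ : ℕ → ℝ)
    (hθ : ∀ n, θ n ∈ Set.Icc 0 Real.pi)
    (ha : Tendsto a atTop atTop) (hb : Tendsto b atTop atTop)
    (hc : Tendsto c atTop atTop)
    (habc : Tendsto (fun n => a n + b n - c n) atTop (𝓝 (2 * s)))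
    (hlaw : ∀ n, Real.cosh (c n) =
      Real.cosh (a n) * Real.cosh (b n) - Real.sinh (a n) * Real.sinh (b n) * Real.cos (θ n)) :
    Tendsto (fun n => Real.cos (θ n)) atTop (𝓝 (1 - 2 * Real.exp (-(2 * s)))) ∧
    ∀ θinf ∈ Set.Icc 0 Real.pi, Tendsto θ atTop (𝓝 θinf) →
      Real.sin (θinf / 2) = Real.exp (-s) :=
  gromov_product_angle_limit_general s a b c θ ha hb habc hlaw
end

section
/- In the hyperbolic plane of curvature -1, fix a > 0 and consider triangles with sides a, b, c where the angle θ is at the vertex between the sides of lengths a and b. If b, c → ∞ with c - b → β ∈ ℝ, then cos θ → (cosh a - e^{β})/ sinh a; equivalently the limiting angle θ_∞ satisfies e^{β} = cosh a - sinh a · cos θ_∞. -/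
/-!
By the law of cosines, `cos θ = (cosh a * (cosh b / sinh b) - cosh c / sinh b) / sinh a` once
`sinh b > 0`. Since `cosh` and `sinh` both grow like `exp / 2`, the ratio `cosh c / sinh b`
behaves like `exp (c - b) → exp β`, and `cosh b / sinh b → 1`.
-/

open Set Filter Topology

open Real

lemma Real.cosh_mul_exp_neg (x : ℝ) : cosh x * exp (-x) = (1 + exp (-x) ^ 2) / 2 := by
  rw [cosh_eq, exp_neg]
  field_simp

lemma Real.sinh_mul_exp_neg (x : ℝ) : sinh x * exp (-x) = (1 - exp (-x) ^ 2) / 2 := by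
  rw [sinh_eq, exp_neg]
  field_simp

lemma Real.tendsto_cosh_mul_exp_neg_atTop :
    Tendsto (fun x => cosh x * exp (-x)) atTop (𝓝 (1 / 2)) := by
  simp_rw [cosh_mul_exp_neg]
  simpa using ((tendsto_exp_neg_atTop_nhds_zero.pow 2).const_add 1).div_const 2

lemma Real.tendsto_sinh_mul_exp_neg_atTop :
    Tendsto (fun x => sinh x * exp (-x)) atTop (𝓝 (1 / 2)) := by
  simp_rw [sinh_mul_exp_neg]
  simpa using ((tendsto_exp_neg_atTop_nhds_zero.pow 2).const_sub 1).div_const 2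

lemma Real.tendsto_cosh_div_sinh_of_tendsto_sub {α : Type*} {l : Filter α} {u v : α → ℝ}
    {γ : ℝ} (hu : Tendsto u l atTop) (hvu : Tendsto (fun x => v x - u x) l (𝓝 γ)) :
    Tendsto (fun x => cosh (v x) / sinh (u x)) l (𝓝 (exp γ)) := by
  have hv : Tendsto v l atTop := by
    simpa using hu.atTop_add hvu
  have hratio : Tendsto (fun x => cosh (v x) * exp (-v x) * exp (v x - u x) /
      (sinh (u x) * exp (-u x))) l (𝓝 (1 / 2 * exp γ / (1 / 2))) :=
    ((tendsto_cosh_mul_exp_neg_atTop.comp hv).mul ((continuous_exp.tendsto γ).comp hvu)).div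
      (tendsto_sinh_mul_exp_neg_atTop.comp hu) (by norm_num)
  rw [mul_div_cancel_left₀ _ (by norm_num : (1 / 2 : ℝ) ≠ 0)] at hratio
  refine hratio.congr fun x => ?_
  rw [mul_assoc, ← exp_add, show -v x + (v x - u x) = -u x by ring,
    mul_div_mul_right _ _ (exp_pos _).ne']

theorem busemann_angle_limit_general (a β : ℝ) (ha : 0 < a)
    (b c θ : ℕ → ℝ)
    (hb : Tendsto b atTop atTop)
    (hcb : Tendsto (fun n => c n - b n) atTop (𝓝 β))
    (hlaw : ∀ n, Real.cosh (c n) =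
      Real.cosh a * Real.cosh (b n) - Real.sinh a * Real.sinh (b n) * Real.cos (θ n)) :
    Tendsto (fun n => Real.cos (θ n)) atTop
      (𝓝 ((Real.cosh a - Real.exp β) / Real.sinh a)) ∧
    ∀ θinf : ℝ, Tendsto θ atTop (𝓝 θinf) →
      Real.exp β = Real.cosh a - Real.sinh a * Real.cos θinf := by
  have hsinh_a : 0 < sinh a := sinh_pos_iff.mpr ha
  have hbb : Tendsto (fun n => cosh (b n) / sinh (b n)) atTop (𝓝 1) := by
    simpa using tendsto_cosh_div_sinh_of_tendsto_sub hb (v := b) (γ := 0) (by simp)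
  have hcos_eq : ∀ᶠ n in atTop, cos (θ n) =
      (cosh a * (cosh (b n) / sinh (b n)) - cosh (c n) / sinh (b n)) / sinh a := by
    filter_upwards [hb.eventually_gt_atTop 0] with n hn
    have hsinh_b : 0 < sinh (b n) := sinh_pos_iff.mpr hn
    field_simp
    linarith [hlaw n]
  have hcos : Tendsto (fun n => cos (θ n)) atTop (𝓝 ((cosh a - exp β) / sinh a)) := by
    refine Tendsto.congr' (EventuallyEq.symm hcos_eq) ?_
    simpa using ((hbb.const_mul (cosh a)).sub
      (tendsto_cosh_div_sinh_of_tendsto_sub hb hcb)).div_const (sinh a)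
  refine ⟨hcos, fun θinf hθ => ?_⟩
  have hlim := tendsto_nhds_unique ((continuous_cos.tendsto θinf).comp hθ) hcos
  rw [eq_div_iff hsinh_a.ne'] at hlim
  linarith

/-- in the hyperbolic plane of curvature -1, fix `a > 0`; for triangles
with sides `a, b, c` and angle `θ` between the sides of lengths `a` and `b`, if
`b, c → ∞` with `c - b → β`, then `cos θ → (cosh a - e^β)/sinh a`; equivalently the
limiting angle `θ∞` satisfies `e^β = cosh a - sinh a · cos θ∞`. -/
theorem busemann_angle_limit (a β : ℝ) (ha : 0 < a)
    (b c θ : ℕ → ℝ)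
    (hθ : ∀ n, θ n ∈ Set.Icc 0 Real.pi)
    (hb : Tendsto b atTop atTop) (hc : Tendsto c atTop atTop)
    (hcb : Tendsto (fun n => c n - b n) atTop (𝓝 β))
    (hlaw : ∀ n, Real.cosh (c n) =
      Real.cosh a * Real.cosh (b n) - Real.sinh a * Real.sinh (b n) * Real.cos (θ n)) :
    Tendsto (fun n => Real.cos (θ n)) atTop
      (𝓝 ((Real.cosh a - Real.exp β) / Real.sinh a)) ∧
    ∀ θinf : ℝ, Tendsto θ atTop (𝓝 θinf) →
      Real.exp β = Real.cosh a - Real.sinh a * Real.cos θinf :=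
  busemann_angle_limit_general a β ha b c θ hb hcb hlaw
end

section
/- Let X be a proper geodesic metric space and f : X → ℝ a continuous proper positive function such that for every geodesic segment γ : [-d,d] → X and every solution g of g'' - g = 0 on [-d,d] with g(±d) = f(γ(±d)), one has f(γ(t)) ≤ g(t) for all t ∈ [-d,d] (i.e. f is F(-1)-convex in the barrier sense). Then f attains its minimum at a unique point of X. -/
/-!
A proper function bounded below has compact nonempty sublevel sets, so it attains its minimum.
If the minimum `m > 0` were attained at two points at distance `2d > 0`, the barrier
`t ↦ m cosh t / cosh d` along the geodesic joining them would force the value `m / cosh d < m`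
at its midpoint.
-/

open Set Filter Topology

/-- A unit-speed geodesic segment parametrized on `[-d, d]`. -/
def IsGeodesicOn {X : Type*} [MetricSpace X] (γ : ℝ → X) (d : ℝ) : Prop :=
  ∀ s t : ℝ, s ∈ Set.Icc (-d) d → t ∈ Set.Icc (-d) d → dist (γ s) (γ t) = |s - t|

/-- `f` is F(-1)-convex in the barrier sense: along every geodesic it is dominated by
every solution `g` of `g'' - g = 0` (i.e. `g t = A cosh t + B sinh t`) agreeing with
`f ∘ γ` at the endpoints. -/
def FMinusOneConvex {X : Type*} [MetricSpace X] (f : X → ℝ) : Prop :=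
  ∀ d : ℝ, 0 ≤ d → ∀ γ : ℝ → X, IsGeodesicOn γ d →
    ∀ A B : ℝ,
      A * Real.cosh (-d) + B * Real.sinh (-d) = f (γ (-d)) →
      A * Real.cosh d + B * Real.sinh d = f (γ d) →
      ∀ t ∈ Set.Icc (-d) d, f (γ t) ≤ A * Real.cosh t + B * Real.sinh t

theorem exists_isMinOn_of_isCompact_preimage {X : Type*} [TopologicalSpace X] [Nonempty X]
    {f : X → ℝ} (hcont : Continuous f) {a : ℝ} (hbdd : ∀ x, a ≤ f x)
    (hproper : ∀ K : Set ℝ, IsCompact K → IsCompact (f ⁻¹' K)) :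
    ∃ x, IsMinOn f univ x := by
  obtain ⟨x₀⟩ := ‹Nonempty X›
  have hK : IsCompact (f ⁻¹' Icc a (f x₀)) := hproper _ isCompact_Icc
  have hfar : ∀ᶠ x in cocompact X, f x₀ ≤ f x := by
    filter_upwards [hK.compl_mem_cocompact] with x hx
    by_contra hlt
    exact hx ⟨hbdd x, (not_le.mp hlt).le⟩
  obtain ⟨x, hx⟩ := hcont.exists_forall_le' x₀ hfar
  exact ⟨x, isMinOn_univ_iff.mpr hx⟩

namespace FMinusOneConvex

variable {X : Type*} [MetricSpace X] {f : X → ℝ}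

theorem apply_midpoint_le_div_cosh (hconv : FMinusOneConvex f) {d : ℝ} (hd : 0 ≤ d)
    {γ : ℝ → X} (hγ : IsGeodesicOn γ d) (hends : f (γ (-d)) = f (γ d)) :
    f (γ 0) ≤ f (γ d) / Real.cosh d := by
  have hcosh : Real.cosh d ≠ 0 := (Real.cosh_pos d).ne'
  have h := hconv d hd γ hγ (f (γ d) / Real.cosh d) 0
    (by rw [Real.cosh_neg, div_mul_cancel₀ _ hcosh, hends]; ring)
    (by rw [div_mul_cancel₀ _ hcosh]; ring) 0 ⟨by linarith, hd⟩
  simpa only [Real.cosh_zero, Real.sinh_zero, mul_one, mul_zero, add_zero] using h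

theorem apply_midpoint_lt (hconv : FMinusOneConvex f) {d : ℝ} (hd : 0 < d)
    {γ : ℝ → X} (hγ : IsGeodesicOn γ d) (hends : f (γ (-d)) = f (γ d))
    (hpos : 0 < f (γ d)) :
    f (γ 0) < f (γ d) := calc
  f (γ 0) ≤ f (γ d) / Real.cosh d := hconv.apply_midpoint_le_div_cosh hd.le hγ hends
  _ < f (γ d) := div_lt_self hpos (Real.one_lt_cosh.mpr hd.ne')

end FMinusOneConvex

theorem fminusone_convex_unique_min_general {X : Type*} [MetricSpace X] [Nonempty X]
    (hgeo : ∀ x y : X, ∃ γ : ℝ → X, IsGeodesicOn γ (dist x y / 2) ∧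
      γ (-(dist x y / 2)) = x ∧ γ (dist x y / 2) = y)
    (f : X → ℝ)
    (hcont : Continuous f)
    (hpos : ∀ x, 0 < f x)
    (hproper : ∀ K : Set ℝ, IsCompact K → IsCompact (f ⁻¹' K))
    (hconv : FMinusOneConvex f) :
    ∃! x : X, IsMinOn f Set.univ x := by
  obtain ⟨x, hx⟩ := exists_isMinOn_of_isCompact_preimage hcont (fun x ↦ (hpos x).le) hproper
  refine ⟨x, hx, fun y hy ↦ ?_⟩
  by_contra hne
  obtain ⟨γ, hγ, hγy, hγx⟩ := hgeo y x
  have hd : 0 < dist y x / 2 := half_pos (dist_pos.mpr hne)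
  have hends : f (γ (-(dist y x / 2))) = f (γ (dist y x / 2)) := by
    rw [hγy, hγx]
    exact le_antisymm (hy (mem_univ x)) (hx (mem_univ y))
  have hmid := hconv.apply_midpoint_lt hd hγ hends (hpos _)
  rw [hγx] at hmid
  exact (hx (mem_univ (γ 0))).not_gt hmid

/-- a continuous, positive, proper, F(-1)-convex function on a proper
geodesic metric space attains its minimum at a unique point. -/
theorem fminusone_convex_unique_min {X : Type*} [MetricSpace X] [ProperSpace X] [Nonempty X]
    (hgeo : ∀ x y : X, ∃ γ : ℝ → X, IsGeodesicOn γ (dist x y / 2) ∧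
      γ (-(dist x y / 2)) = x ∧ γ (dist x y / 2) = y)
    (f : X → ℝ)
    (hcont : Continuous f)
    (hpos : ∀ x, 0 < f x)
    (hproper : ∀ K : Set ℝ, IsCompact K → IsCompact (f ⁻¹' K))
    (hconv : FMinusOneConvex f) :
    ∃! x : X, IsMinOn f Set.univ x :=
  fminusone_convex_unique_min_general hgeo f hcont hpos hproper hconv
end

section
/- Let X be a proper geodesic metric space, and let f_n, f be positive, proper, F(-1)-convex functions on X with f_n → f uniformly on compact sets. Let x_n be the unique minimizer of f_n and x the unique minimizer of f. Then x_n → x. -/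
open Set Filter Topology

/-!
Along a geodesic of length `2d` from `p` to a point `q` with `f q ≤ f p`, the solution of
`g'' = g` with boundary values `f p`, `f q` is at most `2 f(p) e^{-r}` at distance `r ≤ d` from
`p`, so an F(-1)-convex function decays exponentially towards a far-away smaller value. With
`r = log 4` this halves `fₙ(x)` at distance `log 4` from the minimizer `x` of `f`, which is
incompatible with `fₙ ≈ f ≥ f(x)` near `x` once `dist x xₙ > 2 log 4`. Hence the `xₙ`
eventually lie in a fixed compact ball, where uniform convergence and the uniqueness of the
minimizer of `f` force `xₙ → x`.
-/

namespace Real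

theorem sinh_sub_eq_exp_neg_mul_sinh_sub (s r : ℝ) :
    sinh (s - r) = exp (-r) * sinh s - exp (-s) * sinh r := by
  simp only [sinh_eq, sub_eq_add_neg, exp_add, exp_neg]
  field_simp
  ring

theorem sinh_sub_le_exp_neg_mul_sinh (s : ℝ) {r : ℝ} (hr : 0 ≤ r) :
    sinh (s - r) ≤ exp (-r) * sinh s := by
  rw [sinh_sub_eq_exp_neg_mul_sinh_sub]
  have : 0 ≤ exp (-s) * sinh r := mul_nonneg (exp_pos _).le (sinh_nonneg_iff.mpr hr)
  linarith

/-- The coefficients of the solution of `g'' = g` with `g (-d) = a` and `g d = b`. -/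
theorem sinh_interpolation_eq (a b : ℝ) {d : ℝ} (hd : 0 < d) (t : ℝ) :
    (a + b) / (2 * cosh d) * cosh t + (b - a) / (2 * sinh d) * sinh t
      = (a * sinh (d - t) + b * sinh (d + t)) / sinh (2 * d) := by
  have hc : 0 < cosh d := cosh_pos d
  have hs : 0 < sinh d := sinh_pos_iff.mpr hd
  rw [sinh_two_mul, sinh_sub, sinh_add]
  field_simp
  ring

theorem sinh_interpolation_le_two_mul_exp_neg {a b d r : ℝ} (hba : b ≤ a) (ha : 0 ≤ a)
    (hr : 0 < r) (hrd : r ≤ d) :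
    (a * sinh (2 * d - r) + b * sinh r) / sinh (2 * d) ≤ 2 * a * exp (-r) := by
  have h2d : 0 < sinh (2 * d) := sinh_pos_iff.mpr (by linarith)
  have hfar : sinh (2 * d - r) ≤ exp (-r) * sinh (2 * d) := sinh_sub_le_exp_neg_mul_sinh _ hr.le
  have hnear : sinh r ≤ exp (-r) * sinh (2 * d) :=
    calc sinh r = sinh (2 * r - r) := by ring_nf
      _ ≤ exp (-r) * sinh (2 * r) := sinh_sub_le_exp_neg_mul_sinh _ hr.le
      _ ≤ exp (-r) * sinh (2 * d) := by gcongr; exact sinh_le_sinh.mpr (by linarith)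
  have hb : b * sinh r ≤ a * sinh r := mul_le_mul_of_nonneg_right hba (sinh_nonneg_iff.mpr hr.le)
  rw [div_le_iff₀ h2d]
  linarith [mul_le_mul_of_nonneg_left hfar ha, mul_le_mul_of_nonneg_left hnear ha]

end Real

open Real

def GeodesicSpace (X : Type*) [MetricSpace X] : Prop :=
  ∀ x y : X, ∃ γ : ℝ → X, IsGeodesicOn γ (dist x y / 2) ∧
    γ (-(dist x y / 2)) = x ∧ γ (dist x y / 2) = y

namespace FMinusOneConvex

variable {X : Type*} [MetricSpace X] {f : X → ℝ}

theorem le_sinh_interpolation (hf : FMinusOneConvex f) {γ : ℝ → X} {d : ℝ}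
    (hγ : IsGeodesicOn γ d) (hd : 0 < d) {t : ℝ} (ht : t ∈ Icc (-d) d) :
    f (γ t) ≤ (f (γ (-d)) * sinh (d - t) + f (γ d) * sinh (d + t)) / sinh (2 * d) := by
  have h2d : sinh (2 * d) ≠ 0 := (sinh_pos_iff.mpr (by linarith)).ne'
  have hinterp := sinh_interpolation_eq (f (γ (-d))) (f (γ d)) hd
  refine (hf d hd.le γ hγ _ _ ?_ ?_ t ht).trans_eq (hinterp t)
  · rw [hinterp]; simp [← two_mul, h2d]
  · rw [hinterp]; simp [← two_mul, h2d]

theorem exists_dist_eq_le_two_mul_exp_neg (hX : GeodesicSpace X) (hf : FMinusOneConvex f)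
    {p q : X} (hqp : f q ≤ f p) (hp : 0 ≤ f p) {r : ℝ} (hr : 0 < r) (hrpq : 2 * r ≤ dist p q) :
    ∃ y, dist p y = r ∧ f y ≤ 2 * f p * exp (-r) := by
  obtain ⟨γ, hγ, hγp, hγq⟩ := hX p q
  set d := dist p q / 2 with hd
  have hrd : r ≤ d := by linarith
  have ht : r - d ∈ Icc (-d) d := ⟨by linarith, by linarith⟩
  refine ⟨γ (r - d), ?_, ?_⟩
  · rw [← hγp, hγ _ _ ⟨le_rfl, by linarith⟩ ht, show -d - (r - d) = -r by ring, abs_neg,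
      abs_of_pos hr]
  · have hinterp := hf.le_sinh_interpolation hγ (hr.trans_le hrd) ht
    rw [hγp, hγq, show d - (r - d) = 2 * d - r by ring, show d + (r - d) = r by ring] at hinterp
    exact hinterp.trans (sinh_interpolation_le_two_mul_exp_neg hqp hp hr hrd)

theorem dist_le_of_dist_lt (hX : GeodesicSpace X) {g : X → ℝ} (hg : FMinusOneConvex g)
    {p q : X} (hqp : g q ≤ g p) (hfp : ∀ z, f p ≤ f z) (hpos : 0 < f p)
    (happrox : ∀ z ∈ Metric.closedBall p (log 4), dist (f z) (g z) < f p / 4) :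
    dist p q ≤ 2 * log 4 := by
  by_contra! hfar
  have hp := abs_lt.mp (happrox p (Metric.mem_closedBall_self (log_pos (by norm_num)).le))
  obtain ⟨y, hy, hgy⟩ :=
    hg.exists_dist_eq_le_two_mul_exp_neg hX hqp (by linarith) (log_pos (by norm_num)) hfar.le
  have hy' := abs_lt.mp (happrox y (by rw [Metric.mem_closedBall, dist_comm, hy]))
  rw [exp_neg, exp_log (by norm_num)] at hgy
  linarith [hfp y]

end FMinusOneConvex

theorem tendsto_of_tendstoUniformlyOn_of_forall_lt {X ι : Type*} [TopologicalSpace X]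
    {l : Filter ι} {K : Set X} (hK : IsCompact K) {F : ι → X → ℝ} {f : X → ℝ}
    (hf : ContinuousOn f K) {x : ι → X} {x₀ : X} (hx₀K : x₀ ∈ K)
    (hx₀ : ∀ z ∈ K, z ≠ x₀ → f x₀ < f z) (hunif : TendstoUniformlyOn F f l K)
    (hxK : ∀ᶠ n in l, x n ∈ K) (hxmin : ∀ n, F n (x n) ≤ F n x₀) : Tendsto x l (𝓝 x₀) := by
  refine tendsto_nhds.mpr fun U hU hx₀U => ?_
  obtain ⟨c, hc, hcK⟩ := (hK.diff hU).exists_forall_le' (hf.mono sdiff_subset)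
    fun z hz => hx₀ z hz.1 fun h => hz.2 (h ▸ hx₀U)
  have hclose := Metric.tendstoUniformlyOn_iff.mp hunif ((c - f x₀) / 2) (by linarith)
  filter_upwards [hxK, hclose] with n hxn hn
  by_contra hxU
  have h₁ := abs_lt.mp (hn (x n) hxn)
  have h₂ := abs_lt.mp (hn x₀ hx₀K)
  linarith [hxmin n, hcK (x n) ⟨hxn, hxU⟩]

theorem minimizers_converge_general {X : Type*} [MetricSpace X] [ProperSpace X]
    (hgeo : ∀ x y : X, ∃ γ : ℝ → X, IsGeodesicOn γ (dist x y / 2) ∧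
      γ (-(dist x y / 2)) = x ∧ γ (dist x y / 2) = y)
    (F : ℕ → X → ℝ) (f : X → ℝ)
    (hcont : Continuous f)
    (hpos : ∀ x, 0 < f x)
    (hFconv : ∀ n, FMinusOneConvex (F n))
    (x : ℕ → X) (x₀ : X)
    (hxn : ∀ n, IsMinOn (F n) Set.univ (x n))
    (hx₀ : IsMinOn f Set.univ x₀)
    (hx₀uniq : ∀ y, IsMinOn f Set.univ y → y = x₀)
    (hunif : ∀ K : Set X, IsCompact K →
      TendstoUniformlyOn (fun n z => F n z) f atTop K) :
    Tendsto x atTop (𝓝 x₀) := by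
  have hfmin : ∀ z, f x₀ ≤ f z := isMinOn_univ_iff.mp hx₀
  have hlog : 0 < log 4 := log_pos (by norm_num)
  set K := Metric.closedBall x₀ (2 * log 4)
  have hK : IsCompact K := isCompact_closedBall _ _
  have hclose : ∀ᶠ n in atTop, ∀ z ∈ K, dist (f z) (F n z) < f x₀ / 4 :=
    Metric.tendstoUniformlyOn_iff.mp (hunif K hK) _ (by linarith [hpos x₀])
  have hbounded : ∀ᶠ n in atTop, x n ∈ K := by
    filter_upwards [hclose] with n hn
    rw [Metric.mem_closedBall, dist_comm]
    exact (hFconv n).dist_le_of_dist_lt hgeo (hxn n (mem_univ x₀)) hfmin (hpos x₀)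
      fun z hz => hn z (Metric.closedBall_subset_closedBall (by linarith) hz)
  have hstrict : ∀ z ∈ K, z ≠ x₀ → f x₀ < f z := fun z _ hz =>
    (hfmin z).lt_of_ne fun h => hz (hx₀uniq z (isMinOn_univ_iff.mpr (h ▸ hfmin)))
  exact tendsto_of_tendstoUniformlyOn_of_forall_lt hK hcont.continuousOn
    (Metric.mem_closedBall_self (by linarith)) hstrict (hunif K hK) hbounded
    fun n => hxn n (mem_univ _)

/-- if `fₙ → f` uniformly on compacts, where `fₙ, f` are positive, proper,
F(-1)-convex functions with unique minimizers `xₙ, x`, then `xₙ → x`. -/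
theorem minimizers_converge {X : Type*} [MetricSpace X] [ProperSpace X] [Nonempty X]
    (hgeo : ∀ x y : X, ∃ γ : ℝ → X, IsGeodesicOn γ (dist x y / 2) ∧
      γ (-(dist x y / 2)) = x ∧ γ (dist x y / 2) = y)
    (F : ℕ → X → ℝ) (f : X → ℝ)
    (hFcont : ∀ n, Continuous (F n)) (hcont : Continuous f)
    (hFpos : ∀ n x, 0 < F n x) (hpos : ∀ x, 0 < f x)
    (hFproper : ∀ n, ∀ K : Set ℝ, IsCompact K → IsCompact (F n ⁻¹' K))
    (hproper : ∀ K : Set ℝ, IsCompact K → IsCompact (f ⁻¹' K))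
    (hFconv : ∀ n, FMinusOneConvex (F n)) (hconv : FMinusOneConvex f)
    (x : ℕ → X) (x₀ : X)
    (hxn : ∀ n, IsMinOn (F n) Set.univ (x n))
    (hxnuniq : ∀ n y, IsMinOn (F n) Set.univ y → y = x n)
    (hx₀ : IsMinOn f Set.univ x₀)
    (hx₀uniq : ∀ y, IsMinOn f Set.univ y → y = x₀)
    (hunif : ∀ K : Set X, IsCompact K →
      TendstoUniformlyOn (fun n z => F n z) f atTop K) :
    Tendsto x atTop (𝓝 x₀) :=
  minimizers_converge_general hgeo F f hcont hpos hFconv x x₀ hxn hx₀ hx₀uniq hunif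
end
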